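/- K_mbCciw = { B ∈ K_mbC : M(B) validates the axiom schema ciw (∘α ∨ (α ∧ ¬α)) } = { B ∈ K_{CPL+e} : M(B) validates Ax10 (α ∨ ¬α), bc1 (∘α → (α → (¬α → β))) and ciw }. That is, a swap structure B for mbC over a Boolean algebra A has its domain contained in B_A^{ciw} = {z ∈ B_A^{mbC} : z₃ ∨ (z₁ ∧ z₂) = 1} if and only if every valuation over the Nmatrix M(B) sends every instance of ciw to a designated value. -/
import Mathlib


universe u v w u₂

/-- A multialgebra (hyperalgebra, non-deterministic algebra) over a signature `σ`,
where `σ n` is the set of `n`-ary operator symbols: each operator is interpreted as a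
multioperation taking values in the nonempty subsets of the (nonempty) support. -/
structure MultiAlg (σ : ℕ → Type v) : Type (max (u + 1) v) where
  carrier : Type u
  nonempty : Nonempty carrier
  op : ∀ {n : ℕ}, σ n → (Fin n → carrier) → Set carrier
  op_nonempty : ∀ {n : ℕ} (c : σ n) (a : Fin n → carrier), (op c a).Nonempty

namespace MultiAlg

variable {σ : ℕ → Type v}

/-- Homomorphism of multialgebras: `f[c^A(ā)] ⊆ c^B(f ∘ ā)`. -/
def IsHom (A : MultiAlg.{u} σ) (B : MultiAlg.{u₂} σ) (f : A.carrier → B.carrier) : Prop :=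
  ∀ {n : ℕ} (c : σ n) (a : Fin n → A.carrier), f '' A.op c a ⊆ B.op c (f ∘ a)

/-- Full homomorphism of multialgebras: `f[c^A(ā)] = c^B(f ∘ ā)`. -/
def IsFullHom (A : MultiAlg.{u} σ) (B : MultiAlg.{u₂} σ) (f : A.carrier → B.carrier) : Prop :=
  ∀ {n : ℕ} (c : σ n) (a : Fin n → A.carrier), f '' A.op c a = B.op c (f ∘ a)

/-- Isomorphism in the category `MAlg(σ)`: a homomorphism with a two-sided
inverse homomorphism. -/
def IsIso (A : MultiAlg.{u} σ) (B : MultiAlg.{u₂} σ) (f : A.carrier → B.carrier) : Prop :=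
  IsHom A B f ∧ ∃ g : B.carrier → A.carrier,
    IsHom B A g ∧ Function.LeftInverse g f ∧ Function.RightInverse g f

/-- Monomorphism in the category `MAlg(σ)`: a homomorphism which is
left-cancellable with respect to homomorphisms. -/
def IsMono (A : MultiAlg.{u} σ) (B : MultiAlg.{u₂} σ) (f : A.carrier → B.carrier) : Prop :=
  IsHom A B f ∧ ∀ (C : MultiAlg.{w} σ) (g h : C.carrier → A.carrier),
    IsHom C A g → IsHom C A h → f ∘ g = f ∘ h → g = h

/-- Epimorphism in the category `MAlg(σ)`: a homomorphism which is
right-cancellable with respect to homomorphisms. -/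
def IsEpi (A : MultiAlg.{u} σ) (B : MultiAlg.{u₂} σ) (f : A.carrier → B.carrier) : Prop :=
  IsHom A B f ∧ ∀ (C : MultiAlg.{w} σ) (g h : B.carrier → C.carrier),
    IsHom B C g → IsHom B C h → g ∘ f = h ∘ f → g = h

/-- The product of a family of multialgebras. -/
def pi {I : Type w} (F : I → MultiAlg.{u} σ) : MultiAlg.{max u w} σ where
  carrier := ∀ i, (F i).carrier
  nonempty := ⟨fun i => Classical.choice (F i).nonempty⟩
  op := fun {n} c a => {x | ∀ i, x i ∈ (F i).op c fun k => a k i}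
  op_nonempty := fun {n} c a =>
    ⟨fun i => ((F i).op_nonempty c fun k => a k i).choose,
      fun i => ((F i).op_nonempty c fun k => a k i).choose_spec⟩

/-- The one-element multialgebra. -/
def one (σ : ℕ → Type v) : MultiAlg.{u} σ where
  carrier := PUnit
  nonempty := ⟨PUnit.unit⟩
  op := fun _ _ => {PUnit.unit}
  op_nonempty := fun _ _ => ⟨PUnit.unit, rfl⟩

/-- The direct image of a function between (the supports of) two multialgebras,
as a submultialgebra of the codomain:
`c^{f(A)}(b̄) = ⋃ { f[c^A(ā)] : ā ∈ f⁻¹(b̄) }`. -/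
def dirIm (A : MultiAlg.{u} σ) (B : MultiAlg.{u₂} σ) (f : A.carrier → B.carrier) :
    MultiAlg.{u₂} σ where
  carrier := ↥(Set.range f)
  nonempty := ⟨⟨f (Classical.choice A.nonempty), Set.mem_range_self _⟩⟩
  op := fun {n} c b => {y | ∃ a : Fin n → A.carrier,
    (∀ i, f (a i) = (b i : B.carrier)) ∧ (y : B.carrier) ∈ f '' A.op c a}
  op_nonempty := by
    intro n c b
    choose a ha using fun i => (b i).2
    obtain ⟨x, hx⟩ := A.op_nonempty c a
    exact ⟨⟨f x, Set.mem_range_self x⟩, a, ha, x, hx, rfl⟩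

/-- The corestriction `f̄ : A → f(A)` of `f` to the direct image. -/
def corestrict (A : MultiAlg.{u} σ) (B : MultiAlg.{u₂} σ) (f : A.carrier → B.carrier) :
    A.carrier → (dirIm A B f).carrier :=
  fun x => ⟨f x, Set.mem_range_self x⟩

/-- The inclusion `g : f(A) → B` of the direct image in the codomain. -/
def dirImIncl (A : MultiAlg.{u} σ) (B : MultiAlg.{u₂} σ) (f : A.carrier → B.carrier) :
    (dirIm A B f).carrier → B.carrier :=
  fun y => y.val

/-- A multicongruence over a multialgebra. -/
structure IsMulticongruence (A : MultiAlg.{u} σ) (r : A.carrier → A.carrier → Prop) : Prop where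
  equivalence : Equivalence r
  compat : ∀ {n : ℕ} (c : σ n) (a b : Fin n → A.carrier), (∀ i, r (a i) (b i)) →
    ∀ x ∈ A.op c a, ∃ y ∈ A.op c b, r x y
  const : ∀ (c : σ 0) (a : Fin 0 → A.carrier) (x y : A.carrier),
    x ∈ A.op c a → y ∈ A.op c a → r x y

/-- The quotient multialgebra of `A` modulo a relation `r`:
`c^{A/Θ}(a₁/Θ, …, aₙ/Θ) = { a/Θ : a ∈ c^A(ā) }` (taking the union over all
representatives, which is irrelevant when `r` is a multicongruence). -/
def quotAlg (A : MultiAlg.{u} σ) (r : A.carrier → A.carrier → Prop) : MultiAlg.{u} σ where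
  carrier := Quot r
  nonempty := A.nonempty.map (Quot.mk r)
  op := fun {n} c q => {y | ∃ a : Fin n → A.carrier,
    (∀ i, Quot.mk r (a i) = q i) ∧ ∃ x ∈ A.op c a, y = Quot.mk r x}
  op_nonempty := by
    intro n c q
    choose a ha using fun i => Quot.exists_rep (q i)
    obtain ⟨x, hx⟩ := A.op_nonempty c a
    exact ⟨Quot.mk r x, a, ha, x, hx, rfl⟩

end MultiAlg



/-- The signature `Σ = {∧, ∨, →, ¬, ∘}` of the logic mbC. -/
inductive SwapSig : ℕ → Type
  | and : SwapSig 2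
  | or : SwapSig 2
  | imp : SwapSig 2
  | neg : SwapSig 1
  | circ : SwapSig 1

/-- The constraint on the first coordinate of the output of each multioperation
of a swap structure (computed in the underlying Boolean algebra). -/
def swapTgt {A : Type u} [BooleanAlgebra A] :
    ∀ {n : ℕ}, SwapSig n → (Fin n → A × A × A) → A
  | _, .and, a => (a 0).1 ⊓ (a 1).1
  | _, .or, a => (a 0).1 ⊔ (a 1).1
  | _, .imp, a => (a 0).1 ⇨ (a 1).1
  | _, .neg, a => (a 0).2.1
  | _, .circ, a => (a 0).2.2

/-- A swap structure for CPL⁺ₑ over a Boolean algebra `A`: a multialgebra over the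
signature `{∧, ∨, →, ¬, ∘}` whose domain is a set of triples (snapshots) in `A³`
containing some snapshot with first coordinate `0`, and whose (nonempty-valued)
multioperations satisfy
`∅ ≠ z # w ⊆ {u ∈ dom | u₁ = z₁ # w₁}` (for `# ∈ {∧,∨,→}`),
`∅ ≠ ¬z ⊆ {u ∈ dom | u₁ = z₂}` and `∅ ≠ ∘z ⊆ {u ∈ dom | u₁ = z₃}`. -/
structure SwapStr (A : Type u) [BooleanAlgebra A] : Type u where
  dom : Set (A × A × A)
  op : ∀ {n : ℕ}, SwapSig n → (Fin n → A × A × A) → Set (A × A × A)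
  fst_zero : ∃ z ∈ dom, z.1 = ⊥
  op_nonempty : ∀ {n : ℕ} (c : SwapSig n) (a : Fin n → A × A × A),
    (∀ i, a i ∈ dom) → (op c a).Nonempty
  op_sub : ∀ {n : ℕ} (c : SwapSig n) (a : Fin n → A × A × A), (∀ i, a i ∈ dom) →
    op c a ⊆ {u ∈ dom | u.1 = swapTgt c a}



namespace SwapStr

variable {A : Type u} [BooleanAlgebra A]

/-- The multialgebra over the signature `{∧, ∨, →, ¬, ∘}` underlying a swap structure. -/
def toMultiAlg (S : SwapStr A) : MultiAlg SwapSig where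
  carrier := ↥S.dom
  nonempty := by
    obtain ⟨z, hz, -⟩ := S.fst_zero
    exact ⟨⟨z, hz⟩⟩
  op := fun {n} c a => {u : ↥S.dom | (u : A × A × A) ∈ S.op c fun i => (a i : A × A × A)}
  op_nonempty := by
    intro n c a
    obtain ⟨x, hx⟩ := S.op_nonempty c (fun i => (a i : A × A × A)) fun i => (a i).2
    exact ⟨⟨x, (S.op_sub c _ (fun i => (a i).2) hx).1⟩, hx⟩

end SwapStr

/-- The universe of swap structures for mbC over `A`:
`B_A^{mbC} = {z ∈ A³ : z₁ ∨ z₂ = 1 and z₁ ∧ z₂ ∧ z₃ = 0}`. -/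
def BmbcSet (A : Type u) [BooleanAlgebra A] : Set (A × A × A) :=
  {z | z.1 ⊔ z.2.1 = ⊤ ∧ z.1 ⊓ z.2.1 ⊓ z.2.2 = ⊥}

/-- The universe of swap structures for mbCciw over `A`:
`B_A^{ciw} = {z ∈ B_A^{mbC} : z₃ ∨ (z₁ ∧ z₂) = 1}`. -/
def BciwSet (A : Type u) [BooleanAlgebra A] : Set (A × A × A) :=
  {z | z ∈ BmbcSet A ∧ z.2.2 ⊔ (z.1 ⊓ z.2.1) = ⊤}

/-- The full swap structure for mbC over `A`, with domain `B_A^{mbC}` and maximal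
multioperations. -/
def fullMbc (A : Type u) [BooleanAlgebra A] : SwapStr A where
  dom := BmbcSet A
  op := fun {n} c a => {u ∈ BmbcSet A | u.1 = swapTgt c a}
  fst_zero := ⟨(⊥, ⊤, ⊤), ⟨by simp, by simp⟩, rfl⟩
  op_nonempty := fun {n} c a _ =>
    ⟨(swapTgt c a, (swapTgt c a)ᶜ, ⊤), ⟨by simp, by simp⟩, rfl⟩
  op_sub := fun {n} c a _ => Set.Subset.refl _

/-- The full swap structure for CPL⁺ₑ over `A`, with domain `A³` and maximal
multioperations. -/
def fullCPLe (A : Type u) [BooleanAlgebra A] : SwapStr A where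
  dom := Set.univ
  op := fun {n} c a => {u | u.1 = swapTgt c a}
  fst_zero := ⟨(⊥, ⊥, ⊥), trivial, rfl⟩
  op_nonempty := fun {n} c a _ => ⟨(swapTgt c a, ⊥, ⊥), rfl⟩
  op_sub := fun {n} c a _ u hu => ⟨trivial, hu⟩

/-- The map `f⋆(z) = (f(z₁), f(z₂), f(z₃))` induced on full swap structures for mbC
by a Boolean algebra homomorphism `f`. -/
def mapMbc {A : Type u} {A' : Type u₂} [BooleanAlgebra A] [BooleanAlgebra A']
    (f : BoundedLatticeHom A A') (z : ↥(BmbcSet A)) : ↥(BmbcSet A') :=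
  ⟨(f z.1.1, f z.1.2.1, f z.1.2.2), by
    obtain ⟨h1, h2⟩ := z.2
    constructor
    · rw [← map_sup, h1, map_top]
    · rw [← map_inf, ← map_inf, h2, map_bot]⟩

/-- A bundled swap structure for mbC (an object of the category `SW_mbC`). -/
structure MbcSwap : Type (u + 1) where
  base : Type u
  [ba : BooleanAlgebra base]
  str : SwapStr base
  mbc : str.dom ⊆ BmbcSet base

attribute [instance] MbcSwap.ba

/-- Formulas of the logic mbC over the signature `Σ = {∧, ∨, →, ¬, ∘}`,
generated by a denumerable set of propositional variables. -/
inductive Form : Type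
  | var : ℕ → Form
  | and : Form → Form → Form
  | or : Form → Form → Form
  | imp : Form → Form → Form
  | neg : Form → Form
  | circ : Form → Form

/-- A valuation over the Nmatrix `M(S) = (S, D_S)` associated to a swap structure `S`,
where `D_S = {z ∈ dom S : z₁ = 1}`: a map `v` from formulas to the domain of `S` such
that the value of a compound formula belongs to the multioperation applied to the values
of its immediate subformulas. -/
structure IsSwapVal {A : Type u} [BooleanAlgebra A] (S : SwapStr A)
    (v : Form → A × A × A) : Prop where
  mem : ∀ φ, v φ ∈ S.dom
  vand : ∀ φ ψ, v (φ.and ψ) ∈ S.op .and ![v φ, v ψ]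
  vor : ∀ φ ψ, v (φ.or ψ) ∈ S.op .or ![v φ, v ψ]
  vimp : ∀ φ ψ, v (φ.imp ψ) ∈ S.op .imp ![v φ, v ψ]
  vneg : ∀ φ, v φ.neg ∈ S.op .neg ![v φ]
  vcirc : ∀ φ, v φ.circ ∈ S.op .circ ![v φ]

/-- Derivability in the Hilbert calculus CPL⁺ₑ (positive classical logic over the
signature `{∧, ∨, →, ¬, ∘}`, with no axioms or rules for `¬` and `∘`). -/
inductive CPLeDeriv : Set Form → Form → Prop
  | prem {Γ : Set Form} {φ : Form} : φ ∈ Γ → CPLeDeriv Γ φ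
  | ax1 (Γ : Set Form) (α β : Form) : CPLeDeriv Γ (α.imp (β.imp α))
  | ax2 (Γ : Set Form) (α β γ : Form) :
      CPLeDeriv Γ ((α.imp (β.imp γ)).imp ((α.imp β).imp (α.imp γ)))
  | ax3 (Γ : Set Form) (α β : Form) : CPLeDeriv Γ (α.imp (β.imp (α.and β)))
  | ax4 (Γ : Set Form) (α β : Form) : CPLeDeriv Γ ((α.and β).imp α)
  | ax5 (Γ : Set Form) (α β : Form) : CPLeDeriv Γ ((α.and β).imp β)
  | ax6 (Γ : Set Form) (α β : Form) : CPLeDeriv Γ (α.imp (α.or β))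
  | ax7 (Γ : Set Form) (α β : Form) : CPLeDeriv Γ (β.imp (α.or β))
  | ax8 (Γ : Set Form) (α β γ : Form) :
      CPLeDeriv Γ ((α.imp γ).imp ((β.imp γ).imp ((α.or β).imp γ)))
  | ax9 (Γ : Set Form) (α β : Form) : CPLeDeriv Γ ((α.imp β).or α)
  | mp {Γ : Set Form} {α β : Form} :
      CPLeDeriv Γ (α.imp β) → CPLeDeriv Γ α → CPLeDeriv Γ β

/-- Derivability in the Hilbert calculus mbC: CPL⁺ₑ plus
Ax10 `α ∨ ¬α` and bc1 `∘α → (α → (¬α → β))`. -/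
inductive MbcDeriv : Set Form → Form → Prop
  | prem {Γ : Set Form} {φ : Form} : φ ∈ Γ → MbcDeriv Γ φ
  | ax1 (Γ : Set Form) (α β : Form) : MbcDeriv Γ (α.imp (β.imp α))
  | ax2 (Γ : Set Form) (α β γ : Form) :
      MbcDeriv Γ ((α.imp (β.imp γ)).imp ((α.imp β).imp (α.imp γ)))
  | ax3 (Γ : Set Form) (α β : Form) : MbcDeriv Γ (α.imp (β.imp (α.and β)))
  | ax4 (Γ : Set Form) (α β : Form) : MbcDeriv Γ ((α.and β).imp α)
  | ax5 (Γ : Set Form) (α β : Form) : MbcDeriv Γ ((α.and β).imp β)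
  | ax6 (Γ : Set Form) (α β : Form) : MbcDeriv Γ (α.imp (α.or β))
  | ax7 (Γ : Set Form) (α β : Form) : MbcDeriv Γ (β.imp (α.or β))
  | ax8 (Γ : Set Form) (α β γ : Form) :
      MbcDeriv Γ ((α.imp γ).imp ((β.imp γ).imp ((α.or β).imp γ)))
  | ax9 (Γ : Set Form) (α β : Form) : MbcDeriv Γ ((α.imp β).or α)
  | ax10 (Γ : Set Form) (α : Form) : MbcDeriv Γ (α.or α.neg)
  | bc1 (Γ : Set Form) (α β : Form) : MbcDeriv Γ (α.circ.imp (α.imp (α.neg.imp β)))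
  | mp {Γ : Set Form} {α β : Form} :
      MbcDeriv Γ (α.imp β) → MbcDeriv Γ α → MbcDeriv Γ β

namespace SwapStr

variable {A : Type u} [BooleanAlgebra A]

noncomputable def pick (S : SwapStr A) {n : ℕ} (c : SwapSig n) (a : Fin n → ↥S.dom) :
    ↥S.dom :=
  ⟨(S.op_nonempty c (fun i => (a i : A × A × A)) (fun i => (a i).2)).choose,
   (S.op_sub c _ (fun i => (a i).2)
     (S.op_nonempty c _ (fun i => (a i).2)).choose_spec).1⟩

lemma pick_mem (S : SwapStr A) {n : ℕ} (c : SwapSig n) (a : Fin n → ↥S.dom) :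
    (S.pick c a : A × A × A) ∈ S.op c (fun i => (a i : A × A × A)) :=
  (S.op_nonempty c _ (fun i => (a i).2)).choose_spec

noncomputable def mkVal (S : SwapStr A) (g : ℕ → ↥S.dom) : Form → ↥S.dom
  | .var n => g n
  | .and φ ψ => S.pick .and ![S.mkVal g φ, S.mkVal g ψ]
  | .or φ ψ => S.pick .or ![S.mkVal g φ, S.mkVal g ψ]
  | .imp φ ψ => S.pick .imp ![S.mkVal g φ, S.mkVal g ψ]
  | .neg φ => S.pick .neg ![S.mkVal g φ]
  | .circ φ => S.pick .circ ![S.mkVal g φ]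

lemma fun_pair {S : SwapStr A} (f : Form → ↥S.dom) (φ ψ : Form) :
    (fun i => ((![f φ, f ψ] : Fin 2 → ↥S.dom) i : A × A × A))
      = ![(f φ : A × A × A), (f ψ : A × A × A)] := by
  funext i; fin_cases i <;> rfl

lemma fun_single {S : SwapStr A} (f : Form → ↥S.dom) (φ : Form) :
    (fun i => ((![f φ] : Fin 1 → ↥S.dom) i : A × A × A))
      = ![(f φ : A × A × A)] := by
  funext i; fin_cases i <;> rfl

lemma mkVal_isSwapVal (S : SwapStr A) (g : ℕ → ↥S.dom) :
    IsSwapVal S (fun φ => (S.mkVal g φ : A × A × A)) := by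
  refine ⟨fun φ => (S.mkVal g φ).2, ?_, ?_, ?_, ?_, ?_⟩
  · intro φ ψ
    have h := S.pick_mem .and ![S.mkVal g φ, S.mkVal g ψ]
    rw [fun_pair (S := S)] at h
    exact h
  · intro φ ψ
    have h := S.pick_mem .or ![S.mkVal g φ, S.mkVal g ψ]
    rw [fun_pair (S := S)] at h
    exact h
  · intro φ ψ
    have h := S.pick_mem .imp ![S.mkVal g φ, S.mkVal g ψ]
    rw [fun_pair (S := S)] at h
    exact h
  · intro φ
    have h := S.pick_mem .neg ![S.mkVal g φ]
    rw [fun_single (S := S)] at h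
    exact h
  · intro φ
    have h := S.pick_mem .circ ![S.mkVal g φ]
    rw [fun_single (S := S)] at h
    exact h

variable {S : SwapStr A} {v : Form → A × A × A}

lemma val_and (hv : IsSwapVal S v) (φ ψ : Form) :
    (v (φ.and ψ)).1 = (v φ).1 ⊓ (v ψ).1 := by
  have h := (S.op_sub .and ![v φ, v ψ]
    (by intro i; fin_cases i <;> exact hv.mem _) (hv.vand φ ψ)).2
  simpa [swapTgt] using h

lemma val_or (hv : IsSwapVal S v) (φ ψ : Form) :
    (v (φ.or ψ)).1 = (v φ).1 ⊔ (v ψ).1 := by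
  have h := (S.op_sub .or ![v φ, v ψ]
    (by intro i; fin_cases i <;> exact hv.mem _) (hv.vor φ ψ)).2
  simpa [swapTgt] using h

lemma val_imp (hv : IsSwapVal S v) (φ ψ : Form) :
    (v (φ.imp ψ)).1 = (v φ).1 ⇨ (v ψ).1 := by
  have h := (S.op_sub .imp ![v φ, v ψ]
    (by intro i; fin_cases i <;> exact hv.mem _) (hv.vimp φ ψ)).2
  simpa [swapTgt] using h

lemma val_neg (hv : IsSwapVal S v) (φ : Form) :
    (v φ.neg).1 = (v φ).2.1 := by
  have h := (S.op_sub .neg ![v φ]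
    (by intro i; fin_cases i <;> exact hv.mem _) (hv.vneg φ)).2
  simpa [swapTgt] using h

lemma val_circ (hv : IsSwapVal S v) (φ : Form) :
    (v φ.circ).1 = (v φ).2.2 := by
  have h := (S.op_sub .circ ![v φ]
    (by intro i; fin_cases i <;> exact hv.mem _) (hv.vcirc φ)).2
  simpa [swapTgt] using h

lemma val_ciw (hv : IsSwapVal S v) (α : Form) :
    (v (α.circ.or (α.and α.neg))).1 = (v α).2.2 ⊔ ((v α).1 ⊓ (v α).2.1) := by
  rw [val_or hv, val_circ hv, val_and hv, val_neg hv]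

lemma val_ax10 (hv : IsSwapVal S v) (α : Form) :
    (v (α.or α.neg)).1 = (v α).1 ⊔ (v α).2.1 := by
  rw [val_or hv, val_neg hv]

lemma val_bc1 (hv : IsSwapVal S v) (α β : Form) :
    (v (α.circ.imp (α.imp (α.neg.imp β)))).1
      = (v α).2.2 ⇨ ((v α).1 ⇨ ((v α).2.1 ⇨ (v β).1)) := by
  rw [val_imp hv, val_imp hv, val_imp hv, val_circ hv, val_neg hv]

/-- ciw is valid whenever the domain is contained in `B_A^{ciw}`. -/
lemma ciw_valid (h : S.dom ⊆ BciwSet A) (hv : IsSwapVal S v) (α : Form) :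
    (v (α.circ.or (α.and α.neg))).1 = ⊤ := by
  rw [val_ciw hv]
  exact (h (hv.mem α)).2

/-- If every instance of ciw (together with the mbC axioms when needed) gets a
designated value for every valuation built by `mkVal`, the domain is contained
in `B_A^{ciw}`: key construction extracting a valuation hitting a given snapshot. -/
lemma exists_val_var (S : SwapStr A) (z : A × A × A) (hz : z ∈ S.dom) :
    ∃ v : Form → A × A × A, IsSwapVal S v ∧ v (.var 0) = z ∧ (v (.var 1)).1 = ⊥ := by
  obtain ⟨z0, hz0, hz0f⟩ := S.fst_zero
  refine ⟨fun φ => (S.mkVal (fun n => if n = 0 then ⟨z, hz⟩ else ⟨z0, hz0⟩) φ : A × A × A),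
    S.mkVal_isSwapVal _, rfl, ?_⟩
  simpa [mkVal] using hz0f

end SwapStr

theorem kmbcciw_characterization (A : Type u) [BooleanAlgebra A] (S : SwapStr A) :
    (S.dom ⊆ BciwSet A ↔
      (S.dom ⊆ BmbcSet A ∧
        ∀ v : Form → A × A × A, IsSwapVal S v →
          ∀ α : Form, (v (α.circ.or (α.and α.neg))).1 = ⊤)) ∧
    (S.dom ⊆ BciwSet A ↔
      ∀ v : Form → A × A × A, IsSwapVal S v →
        (∀ α : Form, (v (α.or α.neg)).1 = ⊤) ∧
        (∀ α β : Form, (v (α.circ.imp (α.imp (α.neg.imp β)))).1 = ⊤) ∧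
        (∀ α : Form, (v (α.circ.or (α.and α.neg))).1 = ⊤)) := by
  constructor
  · constructor
    · intro h
      exact ⟨fun x hx => (h hx).1, fun v hv α => SwapStr.ciw_valid h hv α⟩
    · rintro ⟨hmbc, hciw⟩ z hz
      obtain ⟨v, hv, hv0, hv1⟩ := S.exists_val_var z hz
      refine ⟨hmbc hz, ?_⟩
      have := hciw v hv (.var 0)
      rw [SwapStr.val_ciw hv, hv0] at this
      exact this
  · constructor
    · intro h v hv
      refine ⟨fun α => ?_, fun α β => ?_, fun α => SwapStr.ciw_valid h hv α⟩
      · rw [SwapStr.val_ax10 hv]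
        exact (h (hv.mem α)).1.1
      · rw [SwapStr.val_bc1 hv]
        have hb : (v α).1 ⊓ (v α).2.1 ⊓ (v α).2.2 = ⊥ := (h (hv.mem α)).1.2
        rw [himp_eq_top_iff, le_himp_iff, le_himp_iff]
        calc (v α).2.2 ⊓ (v α).1 ⊓ (v α).2.1
            = (v α).1 ⊓ (v α).2.1 ⊓ (v α).2.2 := by ac_rfl
          _ = ⊥ := hb
          _ ≤ (v β).1 := bot_le
    · intro H z hz
      obtain ⟨v, hv, hv0, hv1⟩ := S.exists_val_var z hz
      obtain ⟨h10, hbc1, hciw⟩ := H v hv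
      have e10 := h10 (.var 0)
      rw [SwapStr.val_ax10 hv, hv0] at e10
      have ebc := hbc1 (.var 0) (.var 1)
      rw [SwapStr.val_bc1 hv, hv0, hv1, himp_eq_top_iff, le_himp_iff, le_himp_iff] at ebc
      have hb : z.1 ⊓ z.2.1 ⊓ z.2.2 = ⊥ := by
        have : z.1 ⊓ z.2.1 ⊓ z.2.2 ≤ ⊥ := by
          calc z.1 ⊓ z.2.1 ⊓ z.2.2 = z.2.2 ⊓ z.1 ⊓ z.2.1 := by ac_rfl
            _ ≤ ⊥ := le_trans ebc (by simp)
        exact le_bot_iff.mp this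
      have ec := hciw (.var 0)
      rw [SwapStr.val_ciw hv, hv0] at ec
      exact ⟨⟨e10, hb⟩, ec⟩
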